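/- Correctness of the two-candidate base case: let q be a vertex of G and v a vertex of H reachable from q in G, assume (i) every directed walk from q to v in G contains a vertex of S, (ii) for every directed walk W from q to v in G the suffix of W beginning at the last occurrence on W of a vertex of S is a walk in H, and take ω(s) = dist_G(q,s). Suppose D : S → ℝ satisfies dist_G(s,v) ≤ D(s) ≤ dist_H(s,v) for all s ∈ S. If v ∈ Vor(s₁) for some s₁ ∈ S, then ω(s₁) + D(s₁) = dist_G(q,v), and ω(s) + D(s) ≥ dist_G(q,v) for every s ∈ S; consequently, for any s₂ ∈ S, min(ω(s₁) + D(s₁), ω(s₂) + D(s₂)) = dist_G(q,v). -/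

import Mathlib

open scoped ENNReal

/-- A finite directed graph on vertex type `V`, with an adjacency relation and
real-valued edge lengths. -/
structure DiGraph (V : Type) where
  Adj : V → V → Prop
  len : V → V → ℝ

namespace DiGraph

variable {V : Type}

/-- `G.IsWalk a b l` : `l` is (the vertex list of) a directed walk from `a` to `b` in `G`. -/
inductive IsWalk (G : DiGraph V) : V → V → List V → Prop
  | single (a : V) : IsWalk G a a [a]
  | cons {a b c : V} {l : List V} (h : G.Adj a b) (hw : IsWalk G b c l) :
      IsWalk G a c (a :: l)

/-- Total length of a walk given by its vertex list. -/
noncomputable def walkLen (G : DiGraph V) : List V → ℝ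
  | a :: b :: l => G.len a b + G.walkLen (b :: l)
  | _ => 0

/-- `dist G a b` : the infimum, in `ℝ≥0∞`, of the lengths of directed walks
from `a` to `b` (`∞` if there is no such walk). -/
noncomputable def dist (G : DiGraph V) (a b : V) : ℝ≥0∞ :=
  sInf {x : ℝ≥0∞ | ∃ l, G.IsWalk a b l ∧ x = ENNReal.ofReal (G.walkLen l)}

/-- The additively weighted distance `d^ω(s,v) = ω(s) + dist_H(s,v)`, valued in `EReal`
so that arbitrary (possibly infinite) additive weights can be accommodated. -/
noncomputable def dOm (H : DiGraph V) (ω : V → EReal) (s v : V) : EReal :=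
  ω s + ((H.dist s v : ℝ≥0∞) : EReal)

/-- The Voronoi cell of a site `s ∈ S`: the set of vertices `v` of `H` such that for all
`s' ∈ S` with `s' ≠ s`, the pair `(d^ω(s,v), −ω(s))` is lexicographically strictly smaller
than `(d^ω(s',v), −ω(s'))`. -/
def Vor (H : DiGraph V) (HV : Set V) (S : Finset V) (ω : V → EReal) (s : V) : Set V :=
  {v ∈ HV | ∀ s' ∈ S, s' ≠ s →
    dOm H ω s v < dOm H ω s' v ∨ (dOm H ω s v = dOm H ω s' v ∧ ω s' < ω s)}

end DiGraph

/-! Every walk from `q` to `v` splits at its last vertex `s ∈ S` into a `G`-walk `q → s` and,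
by (ii), an `H`-walk `s → v`; hence `dist_G(q,v) ≥ min_{s ∈ S} (ω(s) + dist_H(s,v))`, and
membership `v ∈ Vor(s₁)` says this minimum is attained at `s₁`. So
`ω(s₁) + D(s₁) ≤ ω(s₁) + dist_H(s₁,v) ≤ dist_G(q,v)`, while the triangle inequality in `G`
gives `dist_G(q,v) ≤ ω(s) + dist_G(s,v) ≤ ω(s) + D(s)` for every `s ∈ S`. -/

theorem List.exists_eq_append_cons_forall_not_mem {α : Type*} {S : Set α} :
    ∀ l : List α, (∃ x ∈ l, x ∈ S) →
      ∃ l₁ s l₂, l = l₁ ++ s :: l₂ ∧ s ∈ S ∧ ∀ x ∈ l₂, x ∉ S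
  | [], h => by simp at h
  | a :: t, h => by
      by_cases ht : ∃ x ∈ t, x ∈ S
      · obtain ⟨l₁, s, l₂, rfl, hs, hl₂⟩ := exists_eq_append_cons_forall_not_mem t ht
        exact ⟨a :: l₁, s, l₂, rfl, hs, hl₂⟩
      · push Not at ht
        obtain ⟨x, hx, hxS⟩ := h
        obtain rfl | hx := List.mem_cons.mp hx
        · exact ⟨[], x, t, rfl, hxS, ht⟩
        · exact absurd hxS (ht x hx)

namespace DiGraph

variable {V : Type} {G H : DiGraph V} {a b s : V}

@[simp] theorem walkLen_cons_cons (G : DiGraph V) (a b : V) (l : List V) :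
    G.walkLen (a :: b :: l) = G.len a b + G.walkLen (b :: l) := rfl

theorem walkLen_eq_of_len_eq (h : H.len = G.len) : ∀ l, H.walkLen l = G.walkLen l
  | [] | [_] => rfl
  | a :: b :: l => by rw [walkLen_cons_cons, walkLen_cons_cons, h, walkLen_eq_of_len_eq h]

theorem walkLen_append_cons (G : DiGraph V) (s : V) (l₂ : List V) :
    ∀ l₁ : List V, G.walkLen (l₁ ++ s :: l₂) = G.walkLen (l₁ ++ [s]) + G.walkLen (s :: l₂)
  | [] => by simp [walkLen]
  | [a] => by simp [walkLen]
  | a :: b :: l₁ => by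
      have ih := walkLen_append_cons G s l₂ (b :: l₁)
      simp only [List.cons_append, walkLen_cons_cons] at ih ⊢
      rw [ih]
      ring

theorem IsWalk.exists_eq_cons {l : List V} (h : G.IsWalk a b l) : ∃ t, l = a :: t := by
  cases h <;> exact ⟨_, rfl⟩

theorem IsWalk.exists_eq_concat {l : List V} (h : G.IsWalk a b l) : ∃ p, l = p ++ [b] := by
  induction h with
  | single a => exact ⟨[], rfl⟩
  | cons _ _ ih =>
      obtain ⟨p, rfl⟩ := ih
      exact ⟨_ :: p, rfl⟩

theorem IsWalk.head_eq {x : V} {l : List V} (h : G.IsWalk a b (x :: l)) : x = a := by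
  obtain ⟨t, ht⟩ := h.exists_eq_cons
  exact (List.cons.inj ht).1

theorem IsWalk.tail {x : V} {l : List V} (h : G.IsWalk a b (x :: l)) (hl : l ≠ []) :
    ∃ y, G.Adj x y ∧ G.IsWalk y b l := by
  cases h with
  | single => contradiction
  | cons hadj hw => exact ⟨_, hadj, hw⟩

theorem isWalk_append_cons_iff (l₁ : List V) {l₂ : List V} :
    G.IsWalk a b (l₁ ++ s :: l₂) ↔ G.IsWalk a s (l₁ ++ [s]) ∧ G.IsWalk s b (s :: l₂) := by
  induction l₁ generalizing a with
  | nil =>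
      simp only [List.nil_append]
      refine ⟨fun h => ?_, fun ⟨h₁, h₂⟩ => ?_⟩
      · obtain rfl := h.head_eq
        exact ⟨.single s, h⟩
      · obtain rfl := h₁.head_eq
        exact h₂
  | cons x l₁ ih =>
      simp only [List.cons_append]
      refine ⟨fun h => ?_, fun ⟨h₁, h₂⟩ => ?_⟩
      · obtain rfl := h.head_eq
        obtain ⟨y, hadj, hw⟩ := h.tail (by simp)
        obtain ⟨h₁, h₂⟩ := ih.mp hw
        exact ⟨.cons hadj h₁, h₂⟩
      · obtain rfl := h₁.head_eq
        obtain ⟨y, hadj, hw⟩ := h₁.tail (by simp)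
        exact .cons hadj (ih.mpr ⟨hw, h₂⟩)

theorem walkLen_nonneg (hnonneg : ∀ a b, G.Adj a b → 0 ≤ G.len a b) {l : List V}
    (h : G.IsWalk a b l) : 0 ≤ G.walkLen l := by
  induction h with
  | single => simp [walkLen]
  | cons hadj hw ih =>
      obtain ⟨t, rfl⟩ := hw.exists_eq_cons
      simpa only [walkLen_cons_cons] using add_nonneg (hnonneg _ _ hadj) ih

theorem dist_le_walkLen {l : List V} (h : G.IsWalk a b l) :
    G.dist a b ≤ ENNReal.ofReal (G.walkLen l) := sInf_le ⟨l, h, rfl⟩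

theorem le_dist {x : ℝ≥0∞} (h : ∀ l, G.IsWalk a b l → x ≤ ENNReal.ofReal (G.walkLen l)) :
    x ≤ G.dist a b :=
  le_sInf (by rintro _ ⟨l, hl, rfl⟩; exact h l hl)

theorem dist_eq_iInf (G : DiGraph V) (a b : V) :
    G.dist a b = ⨅ (l) (_ : G.IsWalk a b l), ENNReal.ofReal (G.walkLen l) :=
  le_antisymm (le_iInf₂ fun _ h => dist_le_walkLen h) (le_dist fun l h => iInf₂_le l h)

theorem dist_triangle (G : DiGraph V) (a c b : V) : G.dist a b ≤ G.dist a c + G.dist c b := by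
  rw [dist_eq_iInf G a c, dist_eq_iInf G c b]
  refine ENNReal.le_iInf₂_add_iInf₂ fun l₁ h₁ l₂ h₂ => ?_
  obtain ⟨p, rfl⟩ := h₁.exists_eq_concat
  obtain ⟨t, rfl⟩ := h₂.exists_eq_cons
  calc G.dist a b ≤ ENNReal.ofReal (G.walkLen (p ++ c :: t)) :=
        dist_le_walkLen ((isWalk_append_cons_iff p).mpr ⟨h₁, h₂⟩)
    _ ≤ _ := by rw [walkLen_append_cons]; exact ENNReal.ofReal_add_le

theorem le_dist_of_forall_le_dist_add_dist (hnonneg : ∀ a b, G.Adj a b → 0 ≤ G.len a b)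
    (hlen : H.len = G.len) {S : Set V} {q v : V}
    (hi : ∀ l, G.IsWalk q v l → ∃ s ∈ S, s ∈ l)
    (hii : ∀ l, G.IsWalk q v l → ∀ l₁ s l₂, l = l₁ ++ s :: l₂ → s ∈ S →
      (∀ x ∈ l₂, x ∉ S) → H.IsWalk s v (s :: l₂))
    {x : ℝ≥0∞} (hx : ∀ s ∈ S, x ≤ G.dist q s + H.dist s v) : x ≤ G.dist q v := by
  refine le_dist fun l hl => ?_
  obtain ⟨s₀, hs₀, hs₀l⟩ := hi l hl
  obtain ⟨l₁, s, l₂, rfl, hs, hl₂⟩ :=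
    List.exists_eq_append_cons_forall_not_mem l ⟨s₀, hs₀l, hs₀⟩
  obtain ⟨hpre, hsuf⟩ := (isWalk_append_cons_iff l₁).mp hl
  have hH : H.dist s v ≤ ENNReal.ofReal (G.walkLen (s :: l₂)) := by
    simpa only [walkLen_eq_of_len_eq hlen] using dist_le_walkLen (hii _ hl l₁ s l₂ rfl hs hl₂)
  calc x ≤ G.dist q s + H.dist s v := hx s hs
    _ ≤ ENNReal.ofReal (G.walkLen (l₁ ++ [s])) + ENNReal.ofReal (G.walkLen (s :: l₂)) :=
        add_le_add (dist_le_walkLen hpre) hH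
    _ = ENNReal.ofReal (G.walkLen (l₁ ++ s :: l₂)) := by
        rw [walkLen_append_cons G s l₂ l₁, ENNReal.ofReal_add (walkLen_nonneg hnonneg hpre)
          (walkLen_nonneg hnonneg hsuf)]

theorem dOm_le_of_mem_Vor {HV : Set V} {S : Finset V} {ω : V → EReal} {s₁ v : V}
    (h : v ∈ Vor H HV S ω s₁) (hs : s ∈ S) : dOm H ω s₁ v ≤ dOm H ω s v := by
  rcases eq_or_ne s s₁ with rfl | hne
  · exact le_rfl
  · rcases h.2 s hs hne with hlt | ⟨heq, _⟩
    exacts [hlt.le, heq.le]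

end DiGraph

open DiGraph in
theorem stmt5_general {V : Type} (G H : DiGraph V) (HV : Set V) (S : Finset V)
    (hpos : ∀ a b, G.Adj a b → 0 < G.len a b)
    (hlen : H.len = G.len)
    (q v : V)
    (hi : ∀ l, G.IsWalk q v l → ∃ s ∈ S, s ∈ l)
    (hii : ∀ l, G.IsWalk q v l → ∀ l₁ s l₂, l = l₁ ++ s :: l₂ → s ∈ S →
      (∀ x ∈ l₂, x ∉ (S : Set V)) → H.IsWalk s v (s :: l₂))
    (ω : V → EReal) (hω : ∀ x, ω x = ((G.dist q x : ℝ≥0∞) : EReal))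
    (D : V → ℝ)
    (hD : ∀ s ∈ S, ((G.dist s v : ℝ≥0∞) : EReal) ≤ ((D s : ℝ) : EReal) ∧
      ((D s : ℝ) : EReal) ≤ ((H.dist s v : ℝ≥0∞) : EReal))
    (s₁ : V) (hs₁ : s₁ ∈ S) (hvor : v ∈ DiGraph.Vor H HV S ω s₁) :
    (ω s₁ + ((D s₁ : ℝ) : EReal) = ((G.dist q v : ℝ≥0∞) : EReal)) ∧
    (∀ s ∈ S, ((G.dist q v : ℝ≥0∞) : EReal) ≤ ω s + ((D s : ℝ) : EReal)) ∧
    (∀ s₂ ∈ S, min (ω s₁ + ((D s₁ : ℝ) : EReal)) (ω s₂ + ((D s₂ : ℝ) : EReal)) =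
      ((G.dist q v : ℝ≥0∞) : EReal)) := by
  have hdOm : ∀ s, dOm H ω s v = ((G.dist q s + H.dist s v : ℝ≥0∞) : EReal) := fun s => by
    rw [dOm, hω, EReal.coe_ennreal_add]
  have hsite : G.dist q s₁ + H.dist s₁ v ≤ G.dist q v :=
    le_dist_of_forall_le_dist_add_dist (fun a b h => (hpos a b h).le) hlen hi hii fun s hs => by
      simpa only [hdOm, EReal.coe_ennreal_le_coe_ennreal_iff] using dOm_le_of_mem_Vor hvor hs
  have hlower : ∀ s ∈ S, ((G.dist q v : ℝ≥0∞) : EReal) ≤ ω s + ((D s : ℝ) : EReal) :=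
    fun s hs => calc
      ((G.dist q v : ℝ≥0∞) : EReal) ≤ ((G.dist q s + G.dist s v : ℝ≥0∞) : EReal) := by
          exact_mod_cast G.dist_triangle q s v
      _ = ω s + ((G.dist s v : ℝ≥0∞) : EReal) := by rw [EReal.coe_ennreal_add, hω]
      _ ≤ ω s + ((D s : ℝ) : EReal) := add_le_add le_rfl (hD s hs).1
  have hupper : ω s₁ + ((D s₁ : ℝ) : EReal) ≤ ((G.dist q v : ℝ≥0∞) : EReal) := calc
    ω s₁ + ((D s₁ : ℝ) : EReal) ≤ dOm H ω s₁ v := add_le_add le_rfl (hD s₁ hs₁).2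
    _ ≤ ((G.dist q v : ℝ≥0∞) : EReal) := by rw [hdOm]; exact_mod_cast hsite
  have hexact := le_antisymm hupper (hlower s₁ hs₁)
  exact ⟨hexact, hlower, fun s₂ hs₂ => by rw [hexact]; exact min_eq_left (hlower s₂ hs₂)⟩

/-- Correctness of the two-candidate base case: with `G, H, HV, S` as
usual, `q` a vertex of `G`, `v ∈ HV` reachable from `q` in `G`, hypotheses (i) and (ii)
as in Statement 0, and `ω(s) = dist_G(q,s)`, suppose `D : S → ℝ` satisfies
`dist_G(s,v) ≤ D(s) ≤ dist_H(s,v)` for all `s ∈ S`.  If `v ∈ Vor(s₁)` for some `s₁ ∈ S`,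
then `ω(s₁) + D(s₁) = dist_G(q,v)` and `ω(s) + D(s) ≥ dist_G(q,v)` for every `s ∈ S`;
consequently for any `s₂ ∈ S`,
`min (ω(s₁) + D(s₁)) (ω(s₂) + D(s₂)) = dist_G(q,v)`. -/
theorem stmt5 {V : Type} [Fintype V] (G H : DiGraph V) (HV : Set V) (S : Finset V)
    (hpos : ∀ a b, G.Adj a b → 0 < G.len a b)
    (hsub : ∀ a b, H.Adj a b → G.Adj a b) (hlen : H.len = G.len)
    (hHVedge : ∀ a b, H.Adj a b → a ∈ HV ∧ b ∈ HV)
    (hS : S.Nonempty) (hSH : ↑S ⊆ HV)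
    (q v : V) (hv : v ∈ HV) (hreach : ∃ l, G.IsWalk q v l)
    (hi : ∀ l, G.IsWalk q v l → ∃ s ∈ S, s ∈ l)
    (hii : ∀ l, G.IsWalk q v l → ∀ l₁ s l₂, l = l₁ ++ s :: l₂ → s ∈ S →
      (∀ x ∈ l₂, x ∉ (S : Set V)) → H.IsWalk s v (s :: l₂))
    (ω : V → EReal) (hω : ∀ x, ω x = ((G.dist q x : ℝ≥0∞) : EReal))
    (D : V → ℝ)
    (hD : ∀ s ∈ S, ((G.dist s v : ℝ≥0∞) : EReal) ≤ ((D s : ℝ) : EReal) ∧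
      ((D s : ℝ) : EReal) ≤ ((H.dist s v : ℝ≥0∞) : EReal))
    (s₁ : V) (hs₁ : s₁ ∈ S) (hvor : v ∈ DiGraph.Vor H HV S ω s₁) :
    (ω s₁ + ((D s₁ : ℝ) : EReal) = ((G.dist q v : ℝ≥0∞) : EReal)) ∧
    (∀ s ∈ S, ((G.dist q v : ℝ≥0∞) : EReal) ≤ ω s + ((D s : ℝ) : EReal)) ∧
    (∀ s₂ ∈ S, min (ω s₁ + ((D s₁ : ℝ) : EReal)) (ω s₂ + ((D s₂ : ℝ) : EReal)) =
      ((G.dist q v : ℝ≥0∞) : EReal)) :=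
  stmt5_general G H HV S hpos hlen q v hi hii ω hω D hD s₁ hs₁ hvor
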